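/- arXiv:0908.4326 — 2 statements merged into one kernel-verified Lean document; each statement's English description precedes it below -/
import Mathlib

section
/- Let Q be an m×m real matrix and s > 0 with s greater than the operator norm of Q. Then s · ∫₀^∞ e^{-st} · exp(tQ) dt = s · (sI − Q)⁻¹; in particular sI − Q is invertible. -/
/-!
Let `‖x‖ < s` and `A := x - s • 1`. Then `‖exp (t • A)‖ ≤ exp (-(s - ‖x‖) t)`, so `t ↦ exp (t • A)`
is integrable on `(0, ∞)` and tends to `0`. Its derivative is `A * exp (t • A) = exp (t • A) * A`,
so the fundamental theorem of calculus on `[0, ∞)` gives `A * ∫ exp (t • A) = ∫ exp (t • A) * A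
= 0 - exp 0 = -1`, and `exp (t • A) = e^{-st} exp (t • x)`.
-/

open Matrix MeasureTheory Filter

attribute [local instance] Matrix.linftyOpNormedAddCommGroup Matrix.linftyOpNormedRing
  Matrix.linftyOpNormedAlgebra Matrix.linftyOpNormedSpace

open NormedSpace Set Topology

section Decay

variable {E : Type*} [NormedAddCommGroup E] {f : ℝ → E} {c : ℝ}

theorem integrableOn_Ioi_of_norm_le_exp_neg (hf : Continuous f) (hc : 0 < c)
    (hbound : ∀ t, 0 ≤ t → ‖f t‖ ≤ Real.exp (-c * t)) : IntegrableOn f (Ioi (0 : ℝ)) := by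
  refine (exp_neg_integrableOn_Ioi 0 hc).mono' hf.aestronglyMeasurable.restrict ?_
  filter_upwards [ae_restrict_mem measurableSet_Ioi] with t ht
  exact hbound t ht.le

theorem tendsto_zero_of_norm_le_exp_neg (hc : 0 < c)
    (hbound : ∀ t, 0 ≤ t → ‖f t‖ ≤ Real.exp (-c * t)) : Tendsto f atTop (𝓝 0) := by
  refine squeeze_zero_norm' ((eventually_ge_atTop 0).mono hbound) ?_
  exact Real.tendsto_exp_atBot.comp (tendsto_id.const_mul_atTop_of_neg (neg_neg_of_pos hc))

end Decay

section BanachAlgebra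

variable {𝔸 : Type*} [NormedRing 𝔸] [NormedAlgebra ℝ 𝔸] [CompleteSpace 𝔸]

omit [CompleteSpace 𝔸] in
theorem norm_exp_le_exp_norm [NormOneClass 𝔸] (x : 𝔸) : ‖exp x‖ ≤ Real.exp ‖x‖ := by
  rw [exp_eq_tsum ℝ, Real.exp_eq_exp_ℝ, exp_eq_tsum ℝ]
  refine (norm_tsum_le_tsum_norm (norm_expSeries_summable' (𝕂 := ℝ) x)).trans ?_
  refine (norm_expSeries_summable' x).tsum_le_tsum (fun n => ?_)
    (expSeries_summable' (𝕂 := ℝ) ‖x‖)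
  rw [norm_smul, smul_eq_mul, Real.norm_of_nonneg (by positivity)]
  exact mul_le_mul_of_nonneg_left (norm_pow_le x n) (by positivity)

theorem exp_sub_smul_one (x : 𝔸) (c : ℝ) : exp (x - c • 1) = Real.exp (-c) • exp x := by
  have hcomm : Commute x (algebraMap ℝ 𝔸 (-c)) := Algebra.commutes _ _ |>.symm
  rw [sub_eq_add_neg, ← neg_smul, ← Algebra.algebraMap_eq_smul_one,
    exp_add_of_commute_of_mem_ball (𝕂 := ℝ) hcomm (by simp [expSeries_radius_eq_top])
      (by simp [expSeries_radius_eq_top]), ← algebraMap_exp_comm, ← Real.exp_eq_exp_ℝ,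
    Algebra.algebraMap_eq_smul_one, mul_smul_one]

theorem norm_exp_smul_sub_smul_one_le [NormOneClass 𝔸] (x : 𝔸) (s : ℝ) {t : ℝ} (ht : 0 ≤ t) :
    ‖exp (t • (x - s • 1))‖ ≤ Real.exp (-(s - ‖x‖) * t) :=
  calc ‖exp (t • (x - s • 1))‖ = Real.exp (-(s * t)) * ‖exp (t • x)‖ := by
        rw [smul_sub, smul_smul, mul_comm, exp_sub_smul_one, norm_smul, Real.norm_of_nonneg
          (Real.exp_pos _).le]
    _ ≤ Real.exp (-(s * t)) * Real.exp (t * ‖x‖) := by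
        grw [norm_exp_le_exp_norm, norm_smul, Real.norm_of_nonneg ht]
    _ = Real.exp (-(s - ‖x‖) * t) := by rw [← Real.exp_add]; ring_nf

variable {A : 𝔸}

theorem mul_integral_exp_smul_Ioi (hint : IntegrableOn (fun t : ℝ => exp (t • A)) (Ioi (0 : ℝ)))
    (hlim : Tendsto (fun t : ℝ => exp (t • A)) atTop (𝓝 0)) :
    A * ∫ t in Ioi (0 : ℝ), exp (t • A) = -1 := by
  rw [← integral_const_mul_of_integrable hint,
    integral_Ioi_of_hasDerivAt_of_tendsto (f := fun t : ℝ => exp (t • A))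
      (hasDerivAt_exp_smul_const' A 0).continuousAt.continuousWithinAt
      (fun t _ => hasDerivAt_exp_smul_const' A t) (hint.const_mul A) hlim]
  simp

theorem integral_exp_smul_Ioi_mul (hint : IntegrableOn (fun t : ℝ => exp (t • A)) (Ioi (0 : ℝ)))
    (hlim : Tendsto (fun t : ℝ => exp (t • A)) atTop (𝓝 0)) :
    (∫ t in Ioi (0 : ℝ), exp (t • A)) * A = -1 := by
  rw [← integral_mul_const_of_integrable hint,
    integral_Ioi_of_hasDerivAt_of_tendsto (f := fun t : ℝ => exp (t • A))
      (hasDerivAt_exp_smul_const' A 0).continuousAt.continuousWithinAt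
      (fun t _ => hasDerivAt_exp_smul_const A t) (hint.mul_const A) hlim]
  simp

theorem smul_one_sub_mul_integral_eq_one_and_integral_mul_eq_one [NormOneClass 𝔸] {x : 𝔸} {s : ℝ}
    (hs : ‖x‖ < s) :
    (s • 1 - x) * (∫ t in Ioi (0 : ℝ), Real.exp (-s * t) • exp (t • x)) = 1 ∧
      (∫ t in Ioi (0 : ℝ), Real.exp (-s * t) • exp (t • x)) * (s • 1 - x) = 1 := by
  have hdecay (t : ℝ) (ht : 0 ≤ t) := norm_exp_smul_sub_smul_one_le x s ht
  have hcont : Continuous fun t : ℝ => exp (t • (x - s • 1)) :=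
    continuous_iff_continuousAt.2 fun t => (hasDerivAt_exp_smul_const' _ t).continuousAt
  have hint := integrableOn_Ioi_of_norm_le_exp_neg hcont (sub_pos.2 hs) hdecay
  have hlim := tendsto_zero_of_norm_le_exp_neg (sub_pos.2 hs) hdecay
  have hintegrand (t : ℝ) : Real.exp (-s * t) • exp (t • x) = exp (t • (x - s • 1)) := by
    rw [smul_sub, smul_smul, exp_sub_smul_one, neg_mul, mul_comm]
  simp_rw [hintegrand, ← neg_sub x, neg_mul, mul_neg, mul_integral_exp_smul_Ioi hint hlim,
    integral_exp_smul_Ioi_mul hint hlim, neg_neg, and_self]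

end BanachAlgebra

theorem stmt_0_general {m : ℕ} (Q : Matrix (Fin m) (Fin m) ℝ) (s : ℝ)
    (hQ : ‖Q‖ < s) :
    s • (∫ t in Set.Ioi (0 : ℝ), Real.exp (-s * t) • NormedSpace.exp (t • Q)) =
      s • (s • (1 : Matrix (Fin m) (Fin m) ℝ) - Q)⁻¹ ∧
    IsUnit (s • (1 : Matrix (Fin m) (Fin m) ℝ) - Q) := by
  -- `0 × 0` matrices have `‖1‖ = 0`, so `NormOneClass` needs a nonempty index type.
  cases isEmpty_or_nonempty (Fin m)
  · exact ⟨Subsingleton.elim _ _, isUnit_of_subsingleton _⟩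
  obtain ⟨hright, hleft⟩ := smul_one_sub_mul_integral_eq_one_and_integral_mul_eq_one hQ
  exact ⟨congrArg (s • ·) (Matrix.inv_eq_right_inv hright).symm, ⟨⟨_, _, hright, hleft⟩, rfl⟩⟩

theorem stmt_0 {m : ℕ} (Q : Matrix (Fin m) (Fin m) ℝ) (s : ℝ) (hs : 0 < s)
    (hQ : ‖Q‖ < s) :
    s • (∫ t in Set.Ioi (0 : ℝ), Real.exp (-s * t) • NormedSpace.exp (t • Q)) =
      s • (s • (1 : Matrix (Fin m) (Fin m) ℝ) - Q)⁻¹ ∧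
    IsUnit (s • (1 : Matrix (Fin m) (Fin m) ℝ) - Q) :=
  stmt_0_general Q s hQ
end

section
/- Let Q be the generator of an irreducible finite continuous-time Markov chain on Fin m with stationary distribution π (π Q = 0, π > 0, ∑π_k = 1). Then lim_{s→0⁺} s·(sI − Q)⁻¹ = P₀, where P₀ is the m×m matrix with (P₀)_{kr} = π_r for all k. -/
/-!
Let `P₀ = 𝟙 π` be the matrix all of whose rows are `π`. From `Q 𝟙 = 0`, `π Q = 0` and `π 𝟙 = 1`
we get `Q P₀ = P₀ Q = 0` and `P₀² = P₀`, so `sI - Q` splits along `P₀` and `1 - P₀`: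
`(sI - Q)⁻¹ = s⁻¹ P₀ + (sI + P₀ - Q)⁻¹ (1 - P₀)`. Irreducibility makes `exp Q` a stochastic matrix
with positive entries, so by the maximum principle `ker Q` consists of the constant vectors; with
`π Q = 0` and `∑ π = 1` this makes `P₀ - Q` invertible. Hence
`s (sI - Q)⁻¹ = P₀ + s (sI + P₀ - Q)⁻¹ (1 - P₀) → P₀` as `s → 0`.
-/

open Matrix MeasureTheory Filter

attribute [local instance] Matrix.linftyOpNormedAddCommGroup Matrix.linftyOpNormedRing
  Matrix.linftyOpNormedAlgebra Matrix.linftyOpNormedSpace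

open Topology

lemma NormedSpace.exp_mul_eq_self_of_mul_eq_zero {𝔸 : Type*} [NormedRing 𝔸] [NormedAlgebra ℚ 𝔸]
    [CompleteSpace 𝔸] {x y : 𝔸} (h : x * y = 0) : exp x * y = y := by
  have : SemiconjBy y 0 x := by simp [SemiconjBy, h]
  simpa [SemiconjBy] using this.exp_right.eq.symm

namespace Matrix

variable {n : Type*} [Fintype n]

lemma exp_mulVec_eq_self_of_mulVec_eq_zero [DecidableEq n] {Q : Matrix n n ℝ} {v : n → ℝ}
    (hv : Q *ᵥ v = 0) : NormedSpace.exp Q *ᵥ v = v := by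
  have hQv : Q * replicateCol n v = 0 := by
    rw [← replicateCol_mulVec, hv]; rfl
  have := NormedSpace.exp_mul_eq_self_of_mul_eq_zero hQv
  rw [← replicateCol_mulVec] at this
  exact funext fun i => congrFun (congrFun this i) i

lemma apply_eq_of_mulVec_eq_self_of_pos {P : Matrix n n ℝ} (hrow : ∀ i, ∑ j, P i j = 1)
    (hpos : ∀ i j, 0 < P i j) {v : n → ℝ} (hv : P *ᵥ v = v) (i j : n) : v i = v j := by
  have hne : (Finset.univ : Finset n).Nonempty := ⟨i, Finset.mem_univ _⟩
  obtain ⟨k, -, hk⟩ := Finset.exists_max_image Finset.univ v hne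
  -- at a maximum of `v`, the average `∑ r, P k r * v r = v k` forces every `v r` to equal `v k`
  have hsum : ∑ r, P k r * (v k - v r) = 0 := by
    have hk : ∑ r, P k r * v r = v k := congrFun hv k
    simp only [mul_sub, Finset.sum_sub_distrib, ← Finset.sum_mul, hrow, one_mul, hk, sub_self]
  have hmax : ∀ r, v r = v k := fun r => by
    have := (Finset.sum_eq_zero_iff_of_nonneg fun r _ =>
      mul_nonneg (hpos k r).le (sub_nonneg.2 (hk r (Finset.mem_univ r)))).1 hsum r
      (Finset.mem_univ r)
    have := (mul_eq_zero.1 this).resolve_left (hpos k r).ne'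
    linarith
  rw [hmax i, hmax j]

lemma apply_eq_of_mulVec_eq_zero_of_exp_pos [DecidableEq n] {Q : Matrix n n ℝ}
    (hrow : ∀ i, ∑ j, Q i j = 0) (hpos : ∀ i j, 0 < NormedSpace.exp Q i j) {v : n → ℝ}
    (hv : Q *ᵥ v = 0) (i j : n) : v i = v j := by
  have hexp_row : ∀ i, ∑ j, NormedSpace.exp Q i j = 1 := fun i => by
    have h1 : Q *ᵥ (fun _ => 1) = 0 := funext fun i => by simpa [mulVec, dotProduct] using hrow i
    simpa [mulVec, dotProduct] using congrFun (exp_mulVec_eq_self_of_mulVec_eq_zero h1) i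
  exact apply_eq_of_mulVec_eq_self_of_pos hexp_row hpos
    (exp_mulVec_eq_self_of_mulVec_eq_zero hv) i j

lemma isUnit_det_replicateRow_sub [DecidableEq n] {Q : Matrix n n ℝ}
    (hker : ∀ v : n → ℝ, Q *ᵥ v = 0 → ∀ i j, v i = v j) {π : n → ℝ} (hπsum : ∑ i, π i = 1)
    (hπQ : π ᵥ* Q = 0) : IsUnit (replicateRow n π - Q).det := by
  have hπconst : ∀ c : ℝ, π ⬝ᵥ Function.const n c = c := fun c => by
    simp [dotProduct, ← Finset.sum_mul, hπsum]
  refine isUnit_iff_ne_zero.2 fun hdet => ?_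
  obtain ⟨v, hv0, hv⟩ := exists_mulVec_eq_zero_iff.2 hdet
  have hQv : Q *ᵥ v = Function.const n (π ⬝ᵥ v) := by
    rw [sub_mulVec, sub_eq_zero, replicateRow_mulVec_eq_const] at hv
    exact hv.symm
  have hc : π ⬝ᵥ v = 0 := by
    rw [← hπconst (π ⬝ᵥ v), ← hQv, dotProduct_mulVec, hπQ, zero_dotProduct]
  rw [hc] at hQv
  have hconst := hker v hQv
  refine hv0 (funext fun i => ?_)
  rw [Pi.zero_apply, ← hc, ← hπconst (v i)]
  exact congrArg (π ⬝ᵥ ·) (funext fun j => hconst i j)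

lemma inv_smul_one_sub_eq [DecidableEq n] {K : Type*} [Field K] {Q P : Matrix n n K}
    (hPP : P * P = P) (hQP : Q * P = 0) (hPQ : P * Q = 0) {s : K} (hs : s ≠ 0)
    (hB : IsUnit (s • 1 + (P - Q)).det) :
    (s • 1 - Q)⁻¹ = s⁻¹ • P + (s • 1 + (P - Q))⁻¹ * (1 - P) := by
  set B := s • (1 : Matrix n n K) + (P - Q)
  have hBunit : IsUnit B := (isUnit_iff_isUnit_det B).2 hB
  have hPB : Commute P B := by
    simp only [B, Commute, SemiconjBy, mul_add, add_mul, mul_sub, sub_mul, hPP, hQP, hPQ,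
      Matrix.mul_smul, Matrix.smul_mul, Matrix.mul_one, Matrix.one_mul]
  have hPBinv : P * B⁻¹ = B⁻¹ * P := by
    have h := Commute.units_inv_right (a := P) (u := hBunit.unit) (by rwa [hBunit.unit_spec])
    rwa [coe_units_inv, hBunit.unit_spec] at h
  have hsQ : s • 1 - Q = B - P := by simp only [B]; abel
  have hBP : B * P = s • P + P := by
    simp only [B, add_mul, sub_mul, Matrix.smul_mul, Matrix.one_mul, hPP, hQP, sub_zero]
  have hPcompl : P * (1 - P) = 0 := by rw [mul_sub, mul_one, hPP, sub_self]
  refine inv_eq_right_inv ?_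
  calc (s • 1 - Q) * (s⁻¹ • P + B⁻¹ * (1 - P))
      = s⁻¹ • ((B - P) * P) + (B - P) * B⁻¹ * (1 - P) := by
        rw [hsQ, mul_add, Matrix.mul_smul, mul_assoc]
    _ = P + (1 - P) := by
        rw [sub_mul, sub_mul, hBP, hPP, add_sub_cancel_right, smul_smul, inv_mul_cancel₀ hs,
          one_smul, mul_nonsing_inv B hB, hPBinv, sub_mul, mul_assoc, hPcompl, mul_zero, sub_zero,
          one_mul]
    _ = 1 := add_sub_cancel _ _

lemma tendsto_smul_inv_smul_one_add [DecidableEq n] {𝕜 : Type*} [NormedField 𝕜]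
    {A : Matrix n n 𝕜} (hA : IsUnit A.det) :
    Tendsto (fun s : 𝕜 => s • (s • 1 + A)⁻¹) (𝓝 0) (𝓝 0) := by
  have hinv : ContinuousAt Inv.inv A := continuousAt_matrix_inv A <| by
    rw [Ring.inverse_eq_inv']
    exact continuousAt_inv₀ hA.ne_zero
  have hcont : Tendsto (fun s : 𝕜 => s • (1 : Matrix n n 𝕜) + A) (𝓝 0) (𝓝 A) := by
    have : Continuous fun s : 𝕜 => s • (1 : Matrix n n 𝕜) + A := by fun_prop
    simpa using this.tendsto 0
  simpa using tendsto_id.smul (hinv.tendsto.comp hcont)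

lemma eventually_isUnit_det_smul_one_add [DecidableEq n] {𝕜 : Type*} [NormedField 𝕜]
    {A : Matrix n n 𝕜} (hA : IsUnit A.det) : ∀ᶠ s : 𝕜 in 𝓝 0, IsUnit (s • 1 + A).det := by
  have hcont : Continuous fun s : 𝕜 => (s • (1 : Matrix n n 𝕜) + A).det := by fun_prop
  simpa [isUnit_iff_ne_zero] using hcont.continuousAt.eventually_ne (by simpa using hA.ne_zero)

end Matrix

theorem stmt_13_general {m : ℕ} (Q : Matrix (Fin m) (Fin m) ℝ)
    (hrow : ∀ k, ∑ r, Q k r = 0)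
    (hirr : ∀ t > (0 : ℝ), ∀ k r, 0 < NormedSpace.exp (t • Q) k r)
    (π : Fin m → ℝ) (hπsum : ∑ k, π k = 1)
    (hπQ : Matrix.vecMul π Q = 0) :
    Tendsto (fun s : ℝ => s • (s • (1 : Matrix (Fin m) (Fin m) ℝ) - Q)⁻¹)
      (nhdsWithin 0 (Set.Ioi 0))
      (nhds (Matrix.of fun _ r => π r)) := by
  set P₀ := replicateRow (Fin m) π
  have hPP : P₀ * P₀ = P₀ := by ext; simp [P₀, mul_apply, ← Finset.sum_mul, hπsum]
  have hQP : Q * P₀ = 0 := by ext; simp [P₀, mul_apply, ← Finset.sum_mul, hrow]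
  have hPQ : P₀ * Q = 0 := by rw [← replicateRow_vecMul, hπQ]; rfl
  have hA : IsUnit (P₀ - Q).det := isUnit_det_replicateRow_sub
    (fun _ => apply_eq_of_mulVec_eq_zero_of_exp_pos hrow (by simpa using hirr 1 one_pos))
    hπsum hπQ
  have hres : ∀ᶠ s in 𝓝[>] (0 : ℝ),
      P₀ + s • (s • 1 + (P₀ - Q))⁻¹ * (1 - P₀) = s • (s • 1 - Q)⁻¹ := by
    filter_upwards [nhdsWithin_le_nhds (eventually_isUnit_det_smul_one_add hA),
      self_mem_nhdsWithin] with s hB hs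
    rw [inv_smul_one_sub_eq hPP hQP hPQ (ne_of_gt hs) hB, smul_add, smul_smul,
      mul_inv_cancel₀ (ne_of_gt hs), one_smul, Matrix.smul_mul]
  have hlim := ((tendsto_smul_inv_smul_one_add hA).mul_const (1 - P₀)).const_add P₀
  rw [zero_mul, add_zero] at hlim
  exact (hlim.mono_left nhdsWithin_le_nhds).congr' hres

theorem stmt_13 {m : ℕ} (Q : Matrix (Fin m) (Fin m) ℝ)
    (hoff : ∀ k r, k ≠ r → 0 ≤ Q k r) (hrow : ∀ k, ∑ r, Q k r = 0)
    (hirr : ∀ t > (0 : ℝ), ∀ k r, 0 < NormedSpace.exp (t • Q) k r)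
    (π : Fin m → ℝ) (hπpos : ∀ k, 0 < π k) (hπsum : ∑ k, π k = 1)
    (hπQ : Matrix.vecMul π Q = 0) :
    Tendsto (fun s : ℝ => s • (s • (1 : Matrix (Fin m) (Fin m) ℝ) - Q)⁻¹)
      (nhdsWithin 0 (Set.Ioi 0))
      (nhds (Matrix.of fun _ r => π r)) :=
  stmt_13_general Q hrow hirr π hπsum hπQ
end
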